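/- For all reals a, b with 0 < a < b ≤ 1 there exist δ ∈ (0,1) and an integer M such that for all integers m ≥ M, 0 < J_m(m a) ≤ (1 − δ)^m · J_m(m b); in particular J_m(m a)/J_m(m b) → 0 exponentially fast as m → ∞. -/

import Mathlib

open MeasureTheory Filter Set

/-- The Bessel function of the first kind of order `ν`:
`J_ν(x) = ∑ₖ (-1)^k / (k! Γ(ν+k+1)) (x/2)^(2k+ν)`. -/
noncomputable def besselJ (ν : ℝ) (x : ℝ) : ℝ :=
  ∑' k : ℕ, ((-1 : ℝ) ^ k / ((k.factorial : ℝ) * Real.Gamma (ν + (k : ℝ) + 1))) *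
    (x / 2) ^ (2 * (k : ℝ) + ν)

/-- The derivative `J_ν'` of the Bessel function. -/
noncomputable def besselJDeriv (ν : ℝ) (x : ℝ) : ℝ := deriv (besselJ ν) x

/-- `besselJZero ν s` is the `s`-th positive zero of `J_ν` (for `s ≥ 1`),
listed in increasing order. -/
noncomputable def besselJZero (ν : ℝ) : ℕ → ℝ
  | 0 => 0
  | s + 1 => sInf {x : ℝ | besselJZero ν s < x ∧ besselJ ν x = 0}

/-- `besselJPrimeZero ν s` is the `s`-th positive zero of `J_ν'` (for `s ≥ 1`),
listed in increasing order. -/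
noncomputable def besselJPrimeZero (ν : ℝ) : ℕ → ℝ
  | 0 => 0
  | s + 1 => sInf {x : ℝ | besselJPrimeZero ν s < x ∧ besselJDeriv ν x = 0}

/-!
Write `J_m(x) = x^m E_m(x)`, where `E_m = besselSeries m` is even, entire, and `E_m' = -x E_{m+1}`.
The Riccati quantity `u = x J_m' / J_m` solves `x u' = m² - x² - u²` with `u(0⁺) = m`, and it stays
strictly above `√(m² - x²)` on `(0, m)`: at a first contact the difference would have positive
derivative. So on `(0, m)` we get `J_m > 0` and `J_m' / J_m ≥ √(m² - x²) / x`. With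
`β = (a + b) / 2` this bound is at least `κ = √(1 - β²) / β` on `[m a, m β]`, where `J_m` therefore
grows by the factor `exp (κ m (β - a))`, and `J_m` does not decrease on `[m β, m b]`.
-/

open Real Nat

lemma pos_of_no_first_zero {f : ℝ → ℝ} {r : ℝ} (hf : Continuous f) (h0 : 0 < f 0)
    (h : ∀ x₀ ∈ Ioo 0 r, f x₀ = 0 → (∀ y ∈ Ico 0 x₀, 0 < f y) → False) {x : ℝ}
    (hx : x ∈ Ico 0 r) : 0 < f x := by
  by_contra! hfx
  set Z := Icc 0 x ∩ f ⁻¹' {0}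
  have hZ : IsCompact Z := isCompact_Icc.inter_right (isClosed_singleton.preimage hf)
  obtain ⟨z, hz, hfz⟩ := intermediate_value_Icc' hx.1 hf.continuousOn ⟨hfx, h0.le⟩
  have hx₀ : sInf Z ∈ Z := hZ.sInf_mem ⟨z, hz, hfz⟩
  have hbefore : ∀ y ∈ Ico 0 (sInf Z), 0 < f y := fun y hy => by
    by_contra! hfy
    obtain ⟨z, hz, hfz⟩ := intermediate_value_Icc' hy.1 hf.continuousOn ⟨hfy, h0.le⟩
    have : sInf Z ≤ z := csInf_le hZ.bddBelow ⟨⟨hz.1, hz.2.trans (hy.2.le.trans hx₀.1.2)⟩, hfz⟩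
    linarith [hz.2, hy.2]
  have hx₀0 : sInf Z ≠ 0 := fun h0' => by
    have := hx₀.2
    rw [mem_preimage, h0', mem_singleton_iff] at this
    linarith
  exact h _ ⟨hx₀.1.1.lt_of_ne' hx₀0, hx₀.1.2.trans_lt hx.2⟩ hx₀.2 hbefore

lemma exists_neg_of_hasDerivAt_pos {f : ℝ → ℝ} {d x₀ a : ℝ} (hf : HasDerivAt f d x₀) (hd : 0 < d)
    (h0 : f x₀ = 0) (ha : a < x₀) : ∃ y ∈ Ioo a x₀, f y < 0 := by
  have hsign := eventually_nhdsWithin_sign_eq_of_deriv_pos (hf.deriv ▸ hd) h0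
  obtain ⟨y, hy, hay⟩ :=
    ((hsign.filter_mono (nhdsWithin_le_nhds (s := Iio x₀))).and (Ioo_mem_nhdsLT ha)).exists
  refine ⟨y, hay, ?_⟩
  rwa [_root_.sign_neg (sub_neg.2 hay.2), sign_eq_neg_one_iff] at hy

lemma exp_mul_le_of_mul_le_deriv {f : ℝ → ℝ} {κ a b : ℝ} (hab : a ≤ b)
    (hf : ContinuousOn f (Icc a b)) (hdiff : ∀ x ∈ Ioo a b, DifferentiableAt ℝ f x)
    (hκ : ∀ x ∈ Ioo a b, κ * f x ≤ deriv f x) : exp (κ * (b - a)) * f a ≤ f b := by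
  have hderiv : ∀ x ∈ Ioo a b, HasDerivAt (fun x => exp (-κ * x) * f x)
      (exp (-κ * x) * (deriv f x - κ * f x)) x := fun x hx =>
    (((hasDerivAt_id' x).const_mul (-κ)).exp.mul (hdiff x hx).hasDerivAt).congr_deriv
      (by ring)
  have hmono : MonotoneOn (fun x => exp (-κ * x) * f x) (Icc a b) := by
    refine monotoneOn_of_deriv_nonneg (convex_Icc a b)
      ((continuous_exp.comp (continuous_const.mul continuous_id)).continuousOn.mul hf)
      (fun x hx => ?_) (fun x hx => ?_) <;> rw [interior_Icc] at hx
    · exact (hderiv x hx).differentiableAt.differentiableWithinAt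
    · rw [(hderiv x hx).deriv]
      exact mul_nonneg (exp_pos _).le (sub_nonneg.2 (hκ x hx))
  calc exp (κ * (b - a)) * f a = exp (κ * b) * (exp (-κ * a) * f a) := by
        rw [← mul_assoc, ← exp_add]; ring_nf
    _ ≤ exp (κ * b) * (exp (-κ * b) * f b) :=
        mul_le_mul_of_nonneg_left (hmono (left_mem_Icc.2 hab) (right_mem_Icc.2 hab) hab)
          (exp_pos _).le
    _ = f b := by rw [← mul_assoc, ← exp_add, neg_mul, add_neg_cancel, exp_zero, one_mul]

noncomputable def besselCoeff (m k : ℕ) : ℝ :=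
  (-1) ^ k / (k ! * (m + k)! * 2 ^ (2 * k + m))

lemma abs_besselCoeff_le (m k : ℕ) : |besselCoeff m k| ≤ 1 / k ! := by
  rw [besselCoeff, abs_div, abs_pow, abs_neg, abs_one, one_pow, abs_of_pos (by positivity)]
  gcongr
  have h1 : (1 : ℝ) ≤ (m + k)! := mod_cast (m + k).factorial_pos
  have h2 : (1 : ℝ) ≤ 2 ^ (2 * k + m) := one_le_pow₀ one_le_two
  nlinarith [mul_le_mul h1 h2 zero_le_one (by positivity), (k !).cast_nonneg (α := ℝ)]

lemma besselCoeff_succ_mul (m k : ℕ) :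
    besselCoeff m (k + 1) * (2 * (k + 1)) = -besselCoeff (m + 1) k := by
  rw [besselCoeff, besselCoeff, show m + (k + 1) = m + 1 + k by ring,
    show 2 * (k + 1) + m = 2 * k + (m + 1) + 1 by ring, pow_succ, pow_succ, factorial_succ]
  push_cast
  field_simp

lemma besselCoeff_zero_eq (m : ℕ) : besselCoeff m 0 = (2 * m + 2) * besselCoeff (m + 1) 0 := by
  simp only [besselCoeff, pow_zero, factorial_zero, cast_one, one_mul, mul_zero, zero_add,
    add_zero, factorial_succ, pow_succ]
  push_cast
  field_simp

lemma besselCoeff_succ_recurrence (m k : ℕ) :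
    (2 * m + 2) * besselCoeff (m + 1) (k + 1) - besselCoeff m (k + 1) = besselCoeff (m + 2) k := by
  rw [besselCoeff, besselCoeff, besselCoeff, show m + 1 + (k + 1) = m + k + 1 + 1 by ring,
    show m + (k + 1) = m + k + 1 by ring, show m + 2 + k = m + k + 1 + 1 by ring,
    show 2 * (k + 1) + (m + 1) = 2 * k + m + 3 by ring,
    show 2 * (k + 1) + m = 2 * k + m + 2 by ring, show 2 * k + (m + 2) = 2 * k + m + 2 by ring,
    factorial_succ (m + k + 1), factorial_succ (m + k), factorial_succ k, pow_succ (-1 : ℝ) k]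
  push_cast
  field_simp
  ring

noncomputable def besselSeries (m : ℕ) (x : ℝ) : ℝ :=
  ∑' k, besselCoeff m k * x ^ (2 * k)

lemma summable_besselSeries (m : ℕ) (x : ℝ) :
    Summable fun k => besselCoeff m k * x ^ (2 * k) := by
  refine .of_norm_bounded (summable_pow_div_factorial (x ^ 2)) fun k => ?_
  simp only [norm_mul, norm_pow, Real.norm_eq_abs]
  rw [pow_mul, sq_abs]
  exact (mul_le_mul_of_nonneg_right (abs_besselCoeff_le m k) (by positivity)).trans_eq (by ring)

lemma norm_besselCoeff_mul_deriv_le (m k : ℕ) {y R : ℝ} (hR : 1 ≤ R) (hy : |y| ≤ R) :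
    ‖besselCoeff m k * (2 * k * y ^ (2 * k - 1))‖ ≤ 2 * ((2 * R ^ 2) ^ k / k !) := by
  have hk : (2 * k : ℝ) ≤ 2 * 2 ^ k := by
    gcongr; exact_mod_cast (Nat.lt_two_pow_self (n := k)).le
  have hy' : |y| ^ (2 * k - 1) ≤ (R ^ 2) ^ k := by
    rw [← pow_mul]
    exact (pow_le_pow_left₀ (abs_nonneg y) hy _).trans (pow_le_pow_right₀ hR (Nat.sub_le _ _))
  rw [norm_mul, norm_mul, norm_pow, Real.norm_eq_abs, Real.norm_eq_abs, Real.norm_eq_abs,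
    abs_of_nonneg (by positivity : (0 : ℝ) ≤ 2 * k), mul_pow, div_eq_mul_inv, ← one_div]
  calc |besselCoeff m k| * (2 * k * |y| ^ (2 * k - 1))
      ≤ 1 / k ! * (2 * 2 ^ k * (R ^ 2) ^ k) := by gcongr; exact abs_besselCoeff_le m k
    _ = 2 * (2 ^ k * (R ^ 2) ^ k * (1 / k !)) := by ring

theorem hasDerivAt_besselSeries (m : ℕ) (x : ℝ) :
    HasDerivAt (besselSeries m) (-(x * besselSeries (m + 1) x)) x := by
  set R := |x| + 1
  have hR : 1 ≤ R := le_add_of_nonneg_left (abs_nonneg x)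
  have hu := (summable_pow_div_factorial (2 * R ^ 2)).mul_left 2
  have hbound : ∀ k, ∀ y ∈ Metric.ball (0 : ℝ) R,
      ‖besselCoeff m k * (2 * k * y ^ (2 * k - 1))‖ ≤ 2 * ((2 * R ^ 2) ^ k / k !) :=
    fun k y hy => norm_besselCoeff_mul_deriv_le m k hR (mem_ball_zero_iff.1 hy).le
  have hx : x ∈ Metric.ball (0 : ℝ) R := by simp [R]
  have hderiv := hasDerivAt_tsum_of_isPreconnected hu Metric.isOpen_ball
    (convex_ball 0 R).isPreconnected
    (g := fun k y => besselCoeff m k * y ^ (2 * k))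
    (fun k y _ => ((hasDerivAt_pow (2 * k) y).const_mul _).congr_deriv (by push_cast; ring))
    hbound (Metric.mem_ball_self (by positivity)) (summable_besselSeries m 0) hx
  refine hderiv.congr_deriv ?_
  rw [(Summable.of_norm_bounded hu (hbound · x hx)).tsum_eq_zero_add, besselSeries,
    ← tsum_mul_left, ← tsum_neg]
  simp only [CharP.cast_eq_zero, mul_zero, zero_mul, zero_add]
  refine tsum_congr fun k => ?_
  rw [show 2 * (k + 1) - 1 = 2 * k + 1 by omega, pow_succ]
  push_cast
  linear_combination (x ^ (2 * k) * x) * besselCoeff_succ_mul m k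

lemma besselSeries_recurrence (m : ℕ) (x : ℝ) :
    (2 * m + 2) * besselSeries (m + 1) x - besselSeries m x = x ^ 2 * besselSeries (m + 2) x := by
  have h₁ := (summable_besselSeries (m + 1) x).mul_left (2 * (m : ℝ) + 2)
  have h₀ := summable_besselSeries m x
  rw [besselSeries, besselSeries, besselSeries, ← tsum_mul_left, ← h₁.tsum_sub h₀,
    (h₁.sub h₀).tsum_eq_zero_add, ← tsum_mul_left]
  simp only [mul_zero, pow_zero, mul_one, ← besselCoeff_zero_eq, sub_self, zero_add]
  refine tsum_congr fun k => ?_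
  rw [← besselCoeff_succ_recurrence]
  ring

lemma besselSeries_zero (m : ℕ) : besselSeries m 0 = 1 / (m ! * 2 ^ m) := by
  rw [besselSeries, tsum_eq_single 0 fun k hk => by simp [hk]]
  simp [besselCoeff]

lemma continuous_besselSeries (m : ℕ) : Continuous (besselSeries m) :=
  continuous_iff_continuousAt.2 fun x => (hasDerivAt_besselSeries m x).continuousAt

lemma besselJ_natCast_eq_pow_mul (m : ℕ) (x : ℝ) : besselJ m x = x ^ m * besselSeries m x := by
  rw [besselJ, besselSeries, ← tsum_mul_left]
  refine tsum_congr fun k => ?_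
  rw [show (m : ℝ) + k + 1 = ((m + k : ℕ) : ℝ) + 1 by push_cast; ring, Gamma_nat_eq_factorial,
    show 2 * (k : ℝ) + m = ((2 * k + m : ℕ) : ℝ) by push_cast; ring, rpow_natCast, besselCoeff,
    div_pow, pow_add]
  field_simp

lemma hasDerivAt_besselJ_natCast (m : ℕ) (x : ℝ) :
    HasDerivAt (besselJ m)
      (m * x ^ (m - 1) * besselSeries m x - x ^ (m + 1) * besselSeries (m + 1) x) x := by
  rw [show besselJ m = fun y => y ^ m * besselSeries m y from
    funext (besselJ_natCast_eq_pow_mul m)]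
  exact ((hasDerivAt_pow m x).mul (hasDerivAt_besselSeries m x)).congr_deriv (by ring)

/-- `x ^ (m + 1) * besselDefect m x = J_m'(x) - (√(m² - x²) / x) J_m(x)` on `(0, m]`
(`deriv_besselJ_natCast`); unlike the right-hand side, it is regular at `x = 0`. -/
noncomputable def besselDefect (m : ℕ) (x : ℝ) : ℝ :=
  besselSeries m x / (m + √(m ^ 2 - x ^ 2)) - besselSeries (m + 1) x

lemma deriv_besselJ_natCast {m : ℕ} {x : ℝ} (hx : 0 < x) (hxm : x ≤ m) :
    deriv (besselJ m) x =
      √(m ^ 2 - x ^ 2) / x * besselJ m x + x ^ (m + 1) * besselDefect m x := by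
  obtain ⟨n, rfl⟩ : ∃ n, m = n + 1 :=
    Nat.exists_eq_succ_of_ne_zero (by rintro rfl; simp at hxm; linarith)
  have hs := sq_sqrt (by nlinarith : (0 : ℝ) ≤ ((n + 1 : ℕ) : ℝ) ^ 2 - x ^ 2)
  have hs0 := sqrt_nonneg (((n + 1 : ℕ) : ℝ) ^ 2 - x ^ 2)
  rw [(hasDerivAt_besselJ_natCast _ x).deriv, besselJ_natCast_eq_pow_mul, besselDefect,
    Nat.add_sub_cancel]
  set s := √(((n + 1 : ℕ) : ℝ) ^ 2 - x ^ 2)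
  have : (0 : ℝ) < (n + 1 : ℕ) + s := by positivity
  field_simp
  push_cast at hs ⊢
  linear_combination (-x * x ^ n * besselSeries (n + 1) x) * hs

lemma hasDerivAt_besselDefect_of_eq_zero {m : ℕ} {x : ℝ} (hx : 0 < x) (hxm : x < m)
    (h0 : besselDefect m x = 0) :
    HasDerivAt (besselDefect m) (besselSeries m x / (x * √(m ^ 2 - x ^ 2))) x := by
  have hpos : 0 < (m : ℝ) ^ 2 - x ^ 2 := by nlinarith
  have hs := sq_sqrt hpos.le
  have hs0 := sqrt_pos.2 hpos
  set s := √((m : ℝ) ^ 2 - x ^ 2)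
  have hden : (m : ℝ) + s ≠ 0 := by positivity
  have hsqrt := ((hasDerivAt_pow 2 x).const_sub ((m : ℝ) ^ 2)).sqrt hpos.ne'
  have hA := ((hasDerivAt_besselSeries m x).div (hsqrt.const_add (m : ℝ)) hden).sub
    (hasDerivAt_besselSeries (m + 1) x)
  refine hA.congr_deriv ?_
  have hE₁ : besselSeries (m + 1) x = besselSeries m x / (m + s) := by
    rw [besselDefect, sub_eq_zero] at h0; exact h0.symm
  have hE₂ : besselSeries (m + 1 + 1) x =
      ((2 * m + 2) * besselSeries (m + 1) x - besselSeries m x) / x ^ 2 := by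
    rw [besselSeries_recurrence]; field_simp
  rw [hE₂, hE₁]
  field_simp
  linear_combination 2 * besselSeries m x * (s * m + s ^ 2 - s ^ 2 * m - s ^ 3) * hs

lemma differentiable_besselJ_natCast (m : ℕ) : Differentiable ℝ (besselJ m) :=
  fun x => (hasDerivAt_besselJ_natCast m x).differentiableAt

lemma mul_besselJ_le_deriv {m : ℕ} {x κ : ℝ} (hx : 0 < x) (hxm : x ≤ m)
    (hE : 0 ≤ besselSeries m x) (hA : 0 ≤ besselDefect m x) (hκ : κ ≤ √(m ^ 2 - x ^ 2) / x) :
    κ * besselJ m x ≤ deriv (besselJ m) x := by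
  have hJ : 0 ≤ besselJ m x := by rw [besselJ_natCast_eq_pow_mul]; positivity
  rw [deriv_besselJ_natCast hx hxm]
  nlinarith [mul_le_mul_of_nonneg_right hκ hJ, mul_nonneg (pow_nonneg hx.le (m + 1)) hA]

lemma besselSeries_zero_pos (m : ℕ) : 0 < besselSeries m 0 := by
  rw [besselSeries_zero]
  positivity

lemma besselDefect_zero_pos {m : ℕ} (hm : 0 < m) : 0 < besselDefect m 0 := by
  have hrec := besselSeries_recurrence m 0
  have hE := besselSeries_zero_pos (m + 1)
  have hm' : (0 : ℝ) < m := mod_cast hm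
  rw [besselDefect, zero_pow two_ne_zero, sub_zero, sqrt_sq hm'.le, sub_pos,
    lt_div_iff₀ (by linarith)]
  nlinarith

lemma continuous_besselDefect {m : ℕ} (hm : 0 < m) : Continuous (besselDefect m) := by
  refine ((continuous_besselSeries m).div (continuous_const.add
    (continuous_const.sub (continuous_pow 2)).sqrt) fun x => ?_).sub (continuous_besselSeries _)
  exact (add_pos_of_pos_of_nonneg (Nat.cast_pos.2 hm) (sqrt_nonneg _)).ne'

theorem besselSeries_pos_and_besselDefect_pos {m : ℕ} (hm : 0 < m) {x : ℝ}
    (hx : x ∈ Ico 0 (m : ℝ)) :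
    0 < besselSeries m x ∧ 0 < besselDefect m x := by
  rw [← lt_min_iff]
  refine pos_of_no_first_zero ((continuous_besselSeries m).min (continuous_besselDefect hm))
    (lt_min (besselSeries_zero_pos m) (besselDefect_zero_pos hm)) ?_ hx
  rintro x₀ ⟨hx₀, hx₀m⟩ hmin hbefore
  simp only [lt_min_iff] at hbefore
  have hJ : 0 < besselJ m x₀ := by
    have hJhalf : 0 < besselJ m (x₀ / 2) := by
      rw [besselJ_natCast_eq_pow_mul]
      exact mul_pos (by positivity) (hbefore _ ⟨by positivity, by linarith⟩).1
    have hmono := exp_mul_le_of_mul_le_deriv (κ := 0) (half_le_self hx₀.le)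
      (differentiable_besselJ_natCast m).continuous.continuousOn
      (fun y _ => differentiable_besselJ_natCast m y) fun y hy =>
        mul_besselJ_le_deriv (by linarith [hy.1]) (by linarith [hy.2])
          (hbefore y ⟨by linarith [hy.1], hy.2⟩).1.le (hbefore y ⟨by linarith [hy.1], hy.2⟩).2.le
          (div_nonneg (sqrt_nonneg _) (by linarith [hy.1]))
    rw [zero_mul, exp_zero, one_mul] at hmono
    exact hJhalf.trans_le hmono
  have hE : 0 < besselSeries m x₀ := by
    rw [besselJ_natCast_eq_pow_mul] at hJ
    exact pos_of_mul_pos_right hJ (by positivity)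
  have hA : besselDefect m x₀ = 0 := by
    rcases min_choice (besselSeries m x₀) (besselDefect m x₀) with h | h <;> rw [h] at hmin
    · linarith
    · exact hmin
  obtain ⟨y, hy, hAy⟩ := exists_neg_of_hasDerivAt_pos
    (hasDerivAt_besselDefect_of_eq_zero hx₀ hx₀m hA)
    (div_pos hE (mul_pos hx₀ (sqrt_pos.2 (by nlinarith)))) hA hx₀
  linarith [(hbefore y ⟨hy.1.le, hy.2⟩).2]

lemma besselJ_natCast_pos {m : ℕ} {x : ℝ} (hx : 0 < x) (hxm : x < m) : 0 < besselJ m x := by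
  rw [besselJ_natCast_eq_pow_mul]
  exact mul_pos (pow_pos hx m)
    (besselSeries_pos_and_besselDefect_pos (by exact_mod_cast hx.trans hxm) ⟨hx.le, hxm⟩).1

lemma exp_mul_besselJ_le {m : ℕ} {x y z : ℝ} (hx : 0 < x) (hxy : x ≤ y) (hyz : y ≤ z)
    (hzm : z ≤ m) : exp (√(m ^ 2 - y ^ 2) / y * (y - x)) * besselJ m x ≤ besselJ m z := by
  have hm : 0 < m := by exact_mod_cast hx.trans_le (hxy.trans (hyz.trans hzm))
  have hJ := differentiable_besselJ_natCast m
  have hderiv : ∀ {κ t : ℝ}, 0 < t → t < m → κ ≤ √(m ^ 2 - t ^ 2) / t →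
      κ * besselJ m t ≤ deriv (besselJ m) t := fun ht htm hκ =>
    have hpos := besselSeries_pos_and_besselDefect_pos hm ⟨ht.le, htm⟩
    mul_besselJ_le_deriv ht htm.le hpos.1.le hpos.2.le hκ
  calc exp (√(m ^ 2 - y ^ 2) / y * (y - x)) * besselJ m x ≤ besselJ m y :=
        exp_mul_le_of_mul_le_deriv hxy hJ.continuous.continuousOn (fun t _ => hJ t)
          fun t ht => hderiv (hx.trans ht.1) (by linarith [ht.2]) <|
            div_le_div₀ (sqrt_nonneg _) (sqrt_le_sqrt (by nlinarith [ht.1, ht.2]))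
              (hx.trans ht.1) ht.2.le
    _ ≤ besselJ m z := by
        simpa using exp_mul_le_of_mul_le_deriv (κ := 0) hyz hJ.continuous.continuousOn
          (fun t _ => hJ t) fun t ht =>
            hderiv (by linarith [ht.1]) (by linarith [ht.2])
              (div_nonneg (sqrt_nonneg _) (by linarith [ht.1]))

lemma sqrt_sq_sub_sq_div_mul {c t : ℝ} (hc : 0 < c) :
    √(c ^ 2 - (c * t) ^ 2) / (c * t) = √(1 - t ^ 2) / t := by
  rw [show c ^ 2 - (c * t) ^ 2 = c ^ 2 * (1 - t ^ 2) by ring, sqrt_mul (sq_nonneg c),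
    sqrt_sq hc.le, mul_div_mul_left _ _ hc.ne']

theorem besselJ_natCast_mul_le {m : ℕ} (hm : 0 < m) {a β b : ℝ} (ha : 0 < a) (haβ : a ≤ β)
    (hβb : β ≤ b) (hb : b ≤ 1) :
    besselJ m (m * a) ≤ exp (-(√(1 - β ^ 2) / β * (β - a))) ^ m * besselJ m (m * b) := by
  have hm' : (0 : ℝ) < m := mod_cast hm
  have h := exp_mul_besselJ_le (m := m) (mul_pos hm' ha) (mul_le_mul_of_nonneg_left haβ hm'.le)
    (mul_le_mul_of_nonneg_left hβb hm'.le) (mul_le_of_le_one_right hm'.le hb)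
  rw [sqrt_sq_sub_sq_div_mul hm', ← mul_sub, ← le_div_iff₀' (exp_pos _), div_eq_inv_mul,
    ← exp_neg] at h
  rwa [← exp_nat_mul, show (m : ℝ) * -(√(1 - β ^ 2) / β * (β - a)) =
    -(√(1 - β ^ 2) / β * (m * (β - a))) by ring]

/-- For all `0 < a < b ≤ 1` there exist `δ ∈ (0,1)` and `M` such that for all `m ≥ M`,
`0 < J_m(ma) ≤ (1-δ)^m J_m(mb)`; in particular `J_m(ma)/J_m(mb) → 0`. -/
theorem stmt12 (a b : ℝ) (ha : 0 < a) (hab : a < b) (hb : b ≤ 1) :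
    (∃ δ ∈ Set.Ioo (0:ℝ) 1, ∃ M : ℕ, ∀ m : ℕ, M ≤ m →
      0 < besselJ m ((m:ℝ) * a) ∧
      besselJ m ((m:ℝ) * a) ≤ (1 - δ) ^ m * besselJ m ((m:ℝ) * b)) ∧
    Filter.Tendsto (fun m : ℕ => besselJ m ((m:ℝ) * a) / besselJ m ((m:ℝ) * b))
      Filter.atTop (nhds 0) := by
  set β := (a + b) / 2 with hβ
  set q := exp (-(√(1 - β ^ 2) / β * (β - a)))
  have haβ : a < β := by linarith
  have hβb : β < b := by linarith
  have hq : q < 1 := exp_lt_one_iff.2 <| neg_neg_of_pos <|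
    mul_pos (div_pos (sqrt_pos.2 (by nlinarith)) (by linarith)) (by linarith)
  have key : ∀ m : ℕ, 1 ≤ m →
      0 < besselJ m (m * a) ∧ besselJ m (m * a) ≤ q ^ m * besselJ m (m * b) := fun m hm =>
    have hm' : (0 : ℝ) < m := mod_cast hm
    ⟨besselJ_natCast_pos (mul_pos hm' ha) (mul_lt_of_lt_one_right hm' (hab.trans_le hb)),
      besselJ_natCast_mul_le hm ha haβ.le hβb.le hb⟩
  have hJb : ∀ m : ℕ, 1 ≤ m → 0 < besselJ m (m * b) := fun m hm =>
    pos_of_mul_pos_right ((key m hm).1.trans_le (key m hm).2) (by positivity)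
  refine ⟨⟨1 - q, ⟨sub_pos.2 hq, sub_lt_self 1 (exp_pos _)⟩, 1, by simpa using key⟩, ?_⟩
  exact squeeze_zero'
    (eventually_atTop.2 ⟨1, fun m hm => div_nonneg (key m hm).1.le (hJb m hm).le⟩)
    (eventually_atTop.2 ⟨1, fun m hm => (div_le_iff₀ (hJb m hm)).2 (key m hm).2⟩)
    (tendsto_pow_atTop_nhds_zero_of_lt_one (exp_pos _).le hq)
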